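/- arXiv:2511.08528 — 3 statements merged into one kernel-verified Lean document; each statement's English description precedes it below -/
import Mathlib

section
/- Let L ⊣ R be an idempotent adjunction between C and D, let C^η be the full subcategory of C on objects C for which the unit η_C is an isomorphism. Suppose S is a class of regular monomorphisms in C containing all isomorphisms, closed under composition, and satisfying the left cancellation property (if g∘f ∈ S then f ∈ S). Assume moreover that η_C is an epimorphism for every object C. If i : C → D is a morphism in S and D lies in C^η, then C lies in C^η. -/
open CategoryTheory

theorem CategoryTheory.NatTrans.app_mem_of_mem_of_isIso {C : Type*} [Category C] (S : MorphismProperty C)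
    (hiso : ∀ {X Y : C} (f : X ⟶ Y), IsIso f → S f)
    (hcomp : ∀ {X Y Z : C} (f : X ⟶ Y) (g : Y ⟶ Z), S f → S g → S (f ≫ g))
    (hcancel : ∀ {X Y Z : C} (f : X ⟶ Y) (g : Y ⟶ Z), S (f ≫ g) → S f)
    {F : C ⥤ C} (α : 𝟭 C ⟶ F) {A B : C} (i : A ⟶ B) (hi : S i) (hB : IsIso (α.app B)) :
    S (α.app A) := by
  have hsq : α.app A ≫ F.map i = i ≫ α.app B := (α.naturality i).symm
  exact hcancel _ (F.map i) (hsq ▸ hcomp _ _ hi (hiso _ hB))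

theorem unit_isIso_of_S_mono_general {C D : Type*} [Category C] [Category D]
    (L : C ⥤ D) (R : D ⥤ C) (adj : L ⊣ R)
    (S : MorphismProperty C)
    (hreg : ∀ {X Y : C} (f : X ⟶ Y), S f → RegularMono f)
    (hiso : ∀ {X Y : C} (f : X ⟶ Y), IsIso f → S f)
    (hcomp : ∀ {X Y Z : C} (f : X ⟶ Y) (g : Y ⟶ Z), S f → S g → S (f ≫ g))
    (hcancel : ∀ {X Y Z : C} (f : X ⟶ Y) (g : Y ⟶ Z), S (f ≫ g) → S f)
    (hepi : ∀ X : C, Epi (adj.unit.app X))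
    {A B : C} (i : A ⟶ B) (hi : S i) (hB : IsIso (adj.unit.app B)) :
    IsIso (adj.unit.app A) :=
  have hS := NatTrans.app_mem_of_mem_of_isIso S hiso hcomp hcancel adj.unit i hi hB
  have := hepi A
  isIso_of_regularMono_of_epi _ (hreg _ hS)

/-- For an idempotent adjunction whose unit components are epimorphisms, the fixed
subcategory `C^η` is stable under subobjects belonging to a left-cancellable class `S`
of regular monomorphisms containing the isomorphisms and closed under composition. -/
theorem unit_isIso_of_S_mono {C D : Type*} [Category C] [Category D]
    (L : C ⥤ D) (R : D ⥤ C) (adj : L ⊣ R)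
    (idem : ∀ X : D, IsIso (adj.unit.app (R.obj X)))
    (S : MorphismProperty C)
    (hreg : ∀ {X Y : C} (f : X ⟶ Y), S f → RegularMono f)
    (hiso : ∀ {X Y : C} (f : X ⟶ Y), IsIso f → S f)
    (hcomp : ∀ {X Y Z : C} (f : X ⟶ Y) (g : Y ⟶ Z), S f → S g → S (f ≫ g))
    (hcancel : ∀ {X Y Z : C} (f : X ⟶ Y) (g : Y ⟶ Z), S (f ≫ g) → S f)
    (hepi : ∀ X : C, Epi (adj.unit.app X))
    {A B : C} (i : A ⟶ B) (hi : S i) (hB : IsIso (adj.unit.app B)) :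
    IsIso (adj.unit.app A) :=
  unit_isIso_of_S_mono_general L R adj S hreg hiso hcomp hcancel hepi i hi hB
end

section
/- Let (E,τ) be a Hausdorff locally convex space that is the colimit in the category of locally convex spaces of an increasing sequence of Banach spaces E_1 ↪ E_2 ↪ ⋯ with continuous injective inclusions (an LB-space), and let (X, ‖·‖_X) be a Banach space with a continuous injective linear map X ↪ E. Then there exists n such that X ⊆ E_n and the inclusion X → E_n is continuous. -/
/-!
Pull `v` back along each `u n`: since `E` is Hausdorff, the fibre product `Y ×_E X n` is closed
in `Y × X n`, hence a Banach space, and its projections to `Y` cover `Y`. By Baire, the closure of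
the image of a ball under one of these projections has interior, and the successive approximation
argument of the open mapping theorem makes that projection surjective. It is injective because
`u n` is, so it is an isomorphism of Banach spaces, and its inverse followed by the projection to
`X n` is the factorization.
-/

open Function Metric Set Filter Topology

namespace ContinuousLinearMap

section OpenMapping

variable {𝕜 E F : Type*} [NontriviallyNormedField 𝕜] [NormedAddCommGroup E] [NormedSpace 𝕜 E]
  [NormedAddCommGroup F] [NormedSpace 𝕜 F]

theorem surjective_of_approx_preimage [CompleteSpace E] (f : E →L[𝕜] F) {C : ℝ} (hC : 0 ≤ C)
    (h : ∀ y, ∃ x, ‖y - f x‖ ≤ ‖y‖ / 2 ∧ ‖x‖ ≤ C * ‖y‖) : Surjective f := by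
  choose g hg using h
  intro y
  -- `r n` is what is left of `y` after `n` rounds of approximation.
  set r : ℕ → F := fun n => (fun z => z - f (g z))^[n] y
  have hr_succ : ∀ n, r (n + 1) = r n - f (g (r n)) := fun n => iterate_succ_apply' _ n y
  have hr_le : ∀ n, ‖r n‖ ≤ (1 / 2) ^ n * ‖y‖ := by
    intro n
    induction n with
    | zero => simp [r]
    | succ n ih =>
      rw [hr_succ, pow_succ]
      linarith [(hg (r n)).1]
  have hg_le : ∀ n, ‖g (r n)‖ ≤ (1 / 2) ^ n * ‖y‖ * C := fun n =>
    (hg _).2.trans (by rw [mul_comm]; gcongr; exact hr_le n)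
  have hsum : Summable fun n => g (r n) :=
    .of_norm_bounded ((summable_geometric_two.mul_right _).mul_right _) hg_le
  have hpartial : ∀ n, f (∑ i ∈ Finset.range n, g (r i)) = y - r n := by
    intro n
    have : ∀ i, f (g (r i)) = r i - r (i + 1) := fun i => by rw [hr_succ]; abel
    simp only [map_sum, this, Finset.sum_range_sub']
    rfl
  have hr_lim : Tendsto r atTop (𝓝 0) := by
    refine squeeze_zero_norm hr_le ?_
    simpa using (tendsto_pow_atTop_nhds_zero_of_lt_one (by norm_num) one_half_lt_one).mul_const ‖y‖
  refine ⟨∑' n, g (r n), tendsto_nhds_unique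
    ((f.continuous.tendsto _).comp hsum.hasSum.tendsto_sum_nat) ?_⟩
  simpa [comp_def, hpartial] using tendsto_const_nhds.sub hr_lim

theorem closure_image_ball_mem_nhds_zero (f : E →L[𝕜] F) {r : ℝ} {a : F}
    (ha : a ∈ interior (closure (f '' ball 0 r))) : closure (f '' ball 0 (r + r)) ∈ 𝓝 0 := by
  obtain ⟨ε, hε, hball⟩ := Metric.mem_nhds_iff.1 (mem_interior_iff_mem_nhds.1 ha)
  refine Metric.mem_nhds_iff.2 ⟨ε, hε, fun z hz => ?_⟩
  have hdiff : ∀ p ∈ f '' ball 0 r, ∀ q ∈ f '' ball 0 r, p - q ∈ f '' ball 0 (r + r) := by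
    rintro _ ⟨x, hx, rfl⟩ _ ⟨x', hx', rfl⟩
    refine ⟨x - x', ?_, map_sub f x x'⟩
    rw [mem_ball_zero_iff] at hx hx' ⊢
    exact (norm_sub_le x x').trans_lt (add_lt_add hx hx')
  have hz' : a + z ∈ ball a ε := by simpa using hz
  simpa using map_mem_closure₂ continuous_sub (hball hz') (hball (mem_ball_self hε)) hdiff

end OpenMapping

section Real

variable {E F : Type*} [NormedAddCommGroup E] [NormedSpace ℝ E]
  [NormedAddCommGroup F] [NormedSpace ℝ F]

theorem exists_approx_preimage_of_closure_image_ball_mem_nhds (f : E →L[ℝ] F) {r : ℝ}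
    (h : closure (f '' ball 0 r) ∈ 𝓝 0) :
    ∃ C ≥ 0, ∀ y, ∃ x, ‖y - f x‖ ≤ ‖y‖ / 2 ∧ ‖x‖ ≤ C * ‖y‖ := by
  obtain ⟨δ, hδ, hball⟩ := Metric.mem_nhds_iff.1 h
  have hr : 0 < r := by
    obtain ⟨_, x, hx, -⟩ := closure_nonempty_iff.1 ⟨0, mem_of_mem_nhds h⟩
    exact (norm_nonneg x).trans_lt (mem_ball_zero_iff.1 hx)
  refine ⟨2 * r / δ, by positivity, fun y => ?_⟩
  rcases eq_or_ne y 0 with rfl | hy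
  · exact ⟨0, by simp⟩
  have hy' : 0 < ‖y‖ := norm_pos_iff.2 hy
  -- rescale `y` into `ball 0 δ`, approximate there, and scale back
  set s := δ / (2 * ‖y‖)
  have hs : 0 < s := by positivity
  have hsy_norm : s * ‖y‖ = δ / 2 := by simp only [s]; field_simp
  have hsy : s • y ∈ ball 0 δ := by
    rw [mem_ball_zero_iff, norm_smul, Real.norm_of_nonneg hs.le, hsy_norm]
    linarith
  obtain ⟨_, ⟨x, hx, rfl⟩, hxy⟩ :=
    Metric.mem_closure_iff.1 (hball hsy) (s * ‖y‖ / 2) (by positivity)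
  refine ⟨s⁻¹ • x, ?_, ?_⟩
  · have hrw : y - f (s⁻¹ • x) = s⁻¹ • (s • y - f x) := by
      rw [map_smul, smul_sub, inv_smul_smul₀ hs.ne']
    rw [hrw, norm_smul, Real.norm_of_nonneg (inv_nonneg.2 hs.le), ← dist_eq_norm]
    calc s⁻¹ * dist (s • y) (f x) ≤ s⁻¹ * (s * ‖y‖ / 2) := by gcongr
      _ = ‖y‖ / 2 := by field_simp
  · rw [norm_smul, Real.norm_of_nonneg (inv_nonneg.2 hs.le)]
    calc s⁻¹ * ‖x‖ ≤ s⁻¹ * r := by gcongr; exact (mem_ball_zero_iff.1 hx).le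
      _ = 2 * r / δ * ‖y‖ := by rw [show δ = 2 * (s * ‖y‖) by linarith]; field_simp

theorem surjective_of_nonempty_interior_closure_image_ball [CompleteSpace E] (f : E →L[ℝ] F)
    {r : ℝ} (h : (interior (closure (f '' ball 0 r))).Nonempty) : Surjective f :=
  let ⟨_, ha⟩ := h
  let ⟨_, hC, hf⟩ :=
    exists_approx_preimage_of_closure_image_ball_mem_nhds f (closure_image_ball_mem_nhds_zero f ha)
  surjective_of_approx_preimage f hC hf

end Real

section FiberProd

variable {𝕜 E X Y : Type*} [NontriviallyNormedField 𝕜] [AddCommGroup E] [Module 𝕜 E]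
  [TopologicalSpace E] [NormedAddCommGroup X] [NormedSpace 𝕜 X]
  [NormedAddCommGroup Y] [NormedSpace 𝕜 Y]

def fiberProd (v : Y →L[𝕜] E) (u : X →L[𝕜] E) : Submodule 𝕜 (Y × X) :=
  LinearMap.eqLocus (v.comp (fst 𝕜 Y X) : Y × X →ₗ[𝕜] E) (u.comp (snd 𝕜 Y X))

theorem mem_fiberProd {v : Y →L[𝕜] E} {u : X →L[𝕜] E} {p : Y × X} :
    p ∈ fiberProd v u ↔ v p.1 = u p.2 :=
  Iff.rfl

theorem isClosed_fiberProd [T2Space E] (v : Y →L[𝕜] E) (u : X →L[𝕜] E) :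
    IsClosed (fiberProd v u : Set (Y × X)) :=
  isClosed_eq (v.continuous.comp continuous_fst) (u.continuous.comp continuous_snd)

instance [T2Space E] [CompleteSpace X] [CompleteSpace Y] (v : Y →L[𝕜] E) (u : X →L[𝕜] E) :
    CompleteSpace (fiberProd v u) :=
  (isClosed_fiberProd v u).completeSpace_coe

theorem fst_fiberProd_injective {v : Y →L[𝕜] E} {u : X →L[𝕜] E} (hu : Injective u) :
    Injective ((fst 𝕜 Y X).comp (fiberProd v u).subtypeL) := by
  rintro ⟨⟨y, x⟩, hx⟩ ⟨⟨y', x'⟩, hx'⟩ (rfl : y = y')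
  have : x = x' := hu ((mem_fiberProd.1 hx).symm.trans (mem_fiberProd.1 hx'))
  subst this
  rfl

theorem exists_comp_eq_of_range_subset [T2Space E] [CompleteSpace X] [CompleteSpace Y]
    {v : Y →L[𝕜] E} {u : X →L[𝕜] E} (hu : Injective u) (h : range v ⊆ range u) :
    ∃ w : Y →L[𝕜] X, ∀ y, u (w y) = v y := by
  set π := (fst 𝕜 Y X).comp (fiberProd v u).subtypeL
  have hsurj : Surjective π := fun y =>
    let ⟨x, hx⟩ := h ⟨y, rfl⟩
    ⟨⟨(y, x), mem_fiberProd.2 hx.symm⟩, rfl⟩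
  let e := ContinuousLinearEquiv.ofBijective π
    (LinearMap.ker_eq_bot_of_injective (fst_fiberProd_injective hu))
    (LinearMap.range_eq_top.2 hsurj)
  refine ⟨(snd 𝕜 Y X).comp ((fiberProd v u).subtypeL.comp (e.symm : Y →L[𝕜] fiberProd v u)),
    fun y => ?_⟩
  have hfst : (e.symm y : Y × X).1 = y := e.apply_symm_apply y
  calc u (e.symm y : Y × X).2 = v (e.symm y : Y × X).1 := (mem_fiberProd.1 (e.symm y).2).symm
    _ = v y := by rw [hfst]

end FiberProd

theorem exists_range_subset_range_of_range_subset_iUnion {E Y ι : Type*} [AddCommGroup E]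
    [Module ℝ E] [TopologicalSpace E] [T2Space E] [NormedAddCommGroup Y] [NormedSpace ℝ Y]
    [CompleteSpace Y] [Countable ι] {X : ι → Type*} [∀ i, NormedAddCommGroup (X i)]
    [∀ i, NormedSpace ℝ (X i)] [∀ i, CompleteSpace (X i)] (u : ∀ i, X i →L[ℝ] E)
    (v : Y →L[ℝ] E) (h : range v ⊆ ⋃ i, range (u i)) : ∃ i, range v ⊆ range (u i) := by
  let π i := (fst ℝ Y (X i)).comp (fiberProd v (u i)).subtypeL
  have hcover : ⋃ p : ι × ℕ, closure (π p.1 '' ball 0 p.2) = univ := by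
    refine eq_univ_of_forall fun y => ?_
    obtain ⟨i, x, hx⟩ := mem_iUnion.1 (h ⟨y, rfl⟩)
    let p : fiberProd v (u i) := ⟨(y, x), mem_fiberProd.2 hx.symm⟩
    obtain ⟨k, hk⟩ := exists_nat_gt ‖p‖
    exact mem_iUnion.2 ⟨(i, k), subset_closure ⟨p, mem_ball_zero_iff.2 hk, rfl⟩⟩
  obtain ⟨⟨i, k⟩, hint⟩ := nonempty_interior_of_iUnion_of_closed (fun _ => isClosed_closure) hcover
  refine ⟨i, ?_⟩
  rintro _ ⟨y, rfl⟩
  obtain ⟨p, rfl⟩ := surjective_of_nonempty_interior_closure_image_ball (π i) hint y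
  exact ⟨p.1.2, (mem_fiberProd.1 p.2).symm⟩

end ContinuousLinearMap

theorem grothendieck_factorization_general {E : Type} [AddCommGroup E] [Module ℝ E]
    [TopologicalSpace E] [T2Space E]
    (X : ℕ → Type) [∀ n, NormedAddCommGroup (X n)] [∀ n, NormedSpace ℝ (X n)]
    [∀ n, CompleteSpace (X n)]
    (u : ∀ n, X n →L[ℝ] E) (hu : ∀ n, Function.Injective (u n))
    (hcover : ∀ e : E, ∃ n, e ∈ Set.range (u n))
    (Y : Type) [NormedAddCommGroup Y] [NormedSpace ℝ Y] [CompleteSpace Y]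
    (v : Y →L[ℝ] E) :
    ∃ (n : ℕ) (w : Y →L[ℝ] X n), ∀ y : Y, u n (w y) = v y := by
  obtain ⟨n, hn⟩ := ContinuousLinearMap.exists_range_subset_range_of_range_subset_iUnion u v
    fun e _ => mem_iUnion.2 (hcover e)
  obtain ⟨w, hw⟩ := ContinuousLinearMap.exists_comp_eq_of_range_subset (hu n) hn
  exact ⟨n, w, hw⟩

/-- Grothendieck's factorization theorem for LB-spaces: if a Hausdorff locally convex
space `E` is the locally convex colimit of an increasing sequence of Banach spaces
`X 0 ↪ X 1 ↪ ⋯` with injective continuous linking maps (expressed by the universal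
property: a linear map out of `E` is continuous iff its restrictions to all steps are),
then every continuous injective linear map from a Banach space `Y` into `E` factors
continuously through some step. -/
theorem grothendieck_factorization {E : Type} [AddCommGroup E] [Module ℝ E]
    [TopologicalSpace E] [IsTopologicalAddGroup E] [ContinuousSMul ℝ E] [T2Space E]
    [LocallyConvexSpace ℝ E]
    (X : ℕ → Type) [∀ n, NormedAddCommGroup (X n)] [∀ n, NormedSpace ℝ (X n)]
    [∀ n, CompleteSpace (X n)]
    (j : ∀ n, X n →L[ℝ] X (n + 1)) (hj : ∀ n, Function.Injective (j n))
    (u : ∀ n, X n →L[ℝ] E) (hu : ∀ n, Function.Injective (u n))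
    (hcompat : ∀ n (x : X n), u (n + 1) (j n x) = u n x)
    (hcover : ∀ e : E, ∃ n, e ∈ Set.range (u n))
    (hcolim : ∀ (G : Type) [AddCommGroup G] [Module ℝ G] [TopologicalSpace G]
      [IsTopologicalAddGroup G] [ContinuousSMul ℝ G] [LocallyConvexSpace ℝ G]
      (g : E →ₗ[ℝ] G), (∀ n, Continuous fun x : X n => g (u n x)) → Continuous g)
    (Y : Type) [NormedAddCommGroup Y] [NormedSpace ℝ Y] [CompleteSpace Y]
    (v : Y →L[ℝ] E) (hv : Function.Injective v) :
    ∃ (n : ℕ) (w : Y →L[ℝ] X n), ∀ y : Y, u n (w y) = v y :=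
  grothendieck_factorization_general X u hu hcover Y v
end

section
/- Let E ⊆ F be a linear subspace of a bornological vector space (F,𝓒) equipped with the subspace bornology, and suppose (F,𝓒) admits a presentation as a filtered injective colimit of bornologifications of Banach spaces (F_i,‖·‖_i)^b. If E is complete as a bornological vector space (every bounded set is contained in a Banach disk), then E is bornologically closed in F; conversely, if E is bornologically closed in F, then E is complete. -/
open scoped Pointwise

variable {F : Type*} [AddCommGroup F] [Module ℝ F]

/-- The span of a disk `B`, equipped with the gauge of `B`, is complete. -/
def IsCompleteDisk (B : Set F) : Prop :=
  ∀ y : ℕ → F, (∀ n, y n ∈ Submodule.span ℝ B) →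
    (∀ ε : ℝ, 0 < ε → ∃ N, ∀ m ≥ N, ∀ n ≥ N, y m - y n ∈ ε • B) →
    ∃ x ∈ Submodule.span ℝ B, ∀ ε : ℝ, 0 < ε → ∃ N, ∀ n ≥ N, y n - x ∈ ε • B

/-- The gauge of `B` is a norm (not merely a seminorm) on the span of `B`. -/
def IsSeparatedDisk (B : Set F) : Prop :=
  ∀ x ∈ Submodule.span ℝ B, (∀ ε : ℝ, 0 < ε → x ∈ ε • B) → x = 0

/-- A Banach disk: an absolutely convex set whose span, normed by the gauge,
is a Banach space. -/
def IsBanachDisk (B : Set F) : Prop :=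
  Convex ℝ B ∧ Balanced ℝ B ∧ IsSeparatedDisk B ∧ IsCompleteDisk B

/-- Mackey convergence with respect to a bornology (family of bounded sets). -/
def MackeyTendsto (𝓓 : Set (Set F)) (x : ℕ → F) (l : F) : Prop :=
  ∃ B ∈ 𝓓, ∀ lam : ℝ, lam ≠ 0 → ∃ n₀ : ℕ, ∀ n ≥ n₀, x n - l ∈ lam • B

/-- A set is bornologically closed if it contains the Mackey limits of its sequences. -/
def BornologicallyClosed (𝓓 : Set (Set F)) (U : Set F) : Prop :=
  ∀ (x : ℕ → F) (l : F), (∀ n, x n ∈ U) → MackeyTendsto 𝓓 x l → l ∈ U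

/-!
Work inside the Banach steps `b i`. If `E` is bornologically closed, then `δ • b i ∩ E` is a
Banach disk: a Cauchy sequence in it converges in the Banach disk `δ • b i`, and the limit lies in
`E` because `E` is closed under Mackey limits. Conversely, if `E` is complete and `x n ∈ E` Mackey
converges to `l` in some `b i`, pass to thresholds `N k` after which the differences `x m - x n`
lie in `2⁻ᵏ • b i`; the rescaled differences `2ᵏ • (x m - x n)` form a bounded subset of `E`,
hence lie in a Banach disk `B' ⊆ E`. There the tail of `x` is Cauchy and has a limit in `E`;
comparing both limits in a common Banach step `b p` (the gauge of a Banach disk is a norm)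
shows that `l` lies in `E`.
-/

/-- Convergence in the span of `B` normed by the gauge of `B`. -/
def DiskTendsto (B : Set F) (x : ℕ → F) (l : F) : Prop :=
  ∀ ε : ℝ, 0 < ε → ∃ N, ∀ n ≥ N, x n - l ∈ ε • B

def DiskCauchy (B : Set F) (x : ℕ → F) : Prop :=
  ∀ ε : ℝ, 0 < ε → ∃ N, ∀ m ≥ N, ∀ n ≥ N, x m - x n ∈ ε • B

lemma Submodule.balanced {𝕜 M : Type*} [SeminormedRing 𝕜] [AddCommMonoid M] [Module 𝕜 M]
    (p : Submodule 𝕜 M) : Balanced 𝕜 (p : Set M) := by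
  rintro a - _ ⟨x, hx, rfl⟩
  exact p.smul_mem a hx

lemma Convex.sub_mem_add_smul {B : Set F} (hconv : Convex ℝ B) (hbal : Balanced ℝ B)
    {a a' : ℝ} (ha : 0 ≤ a) (ha' : 0 ≤ a') {u v : F} (hu : u ∈ a • B) (hv : v ∈ a' • B) :
    u - v ∈ (a + a') • B := by
  rw [hconv.add_smul ha ha', sub_eq_add_neg]
  exact Set.add_mem_add hu ((hbal.smul a').neg_mem_iff.2 hv)

lemma mem_smul_inter_submodule {B : Set F} (E : Submodule ℝ F) {ε : ℝ} (hε : ε ≠ 0) {v : F}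
    (hv : v ∈ ε • B) (hvE : v ∈ E) : v ∈ ε • (B ∩ E) := by
  rw [Set.mem_smul_set_iff_inv_smul_mem₀ hε] at hv ⊢
  exact ⟨hv, E.smul_mem _ hvE⟩

section SubsetSmul

variable {B B' : Set F} {c : ℝ}

lemma div_smul_subset_of_subset_smul (hc : 0 < c) (h : B ⊆ c • B') (ε : ℝ) :
    (ε / c) • B ⊆ ε • B' :=
  calc (ε / c) • B ⊆ (ε / c) • c • B' := Set.smul_set_mono h
    _ = ε • B' := by rw [smul_smul, div_mul_cancel₀ _ hc.ne']

lemma subset_span_of_subset_smul (h : B ⊆ c • B') : B ⊆ Submodule.span ℝ B' := by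
  refine h.trans ?_
  rintro _ ⟨d, hd, rfl⟩
  exact Submodule.smul_mem _ _ (Submodule.subset_span hd)

lemma DiskTendsto.of_subset_smul {x : ℕ → F} {l : F} (hx : DiskTendsto B x l) (hc : 0 < c)
    (h : B ⊆ c • B') : DiskTendsto B' x l := fun ε hε =>
  (hx (ε / c) (div_pos hε hc)).imp fun _ hN n hn =>
    div_smul_subset_of_subset_smul hc h ε (hN n hn)

lemma DiskCauchy.of_subset_smul {x : ℕ → F} (hx : DiskCauchy B x) (hc : 0 < c)
    (h : B ⊆ c • B') : DiskCauchy B' x := fun ε hε =>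
  (hx (ε / c) (div_pos hε hc)).imp fun _ hN m hm n hn =>
    div_smul_subset_of_subset_smul hc h ε (hN m hm n hn)

lemma IsSeparatedDisk.of_subset_smul (hB' : IsSeparatedDisk B') (hc : 0 < c)
    (h : B ⊆ c • B') : IsSeparatedDisk B := fun x hx hsmall =>
  hB' x (Submodule.span_le.2 (subset_span_of_subset_smul h) hx) fun ε hε =>
    div_smul_subset_of_subset_smul hc h ε (hsmall _ (div_pos hε hc))

lemma IsCompleteDisk.of_subset_smul (hB : IsCompleteDisk B) {c' : ℝ} (hc : 0 < c)
    (hc' : 0 < c') (h : B ⊆ c • B') (h' : B' ⊆ c' • B) : IsCompleteDisk B' := by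
  intro y hy hcauchy
  have hspan : Submodule.span ℝ B = Submodule.span ℝ B' :=
    le_antisymm (Submodule.span_le.2 (subset_span_of_subset_smul h))
      (Submodule.span_le.2 (subset_span_of_subset_smul h'))
  obtain ⟨x, hx, hlim⟩ := hB y (hspan ▸ hy) (DiskCauchy.of_subset_smul hcauchy hc' h')
  exact ⟨x, hspan ▸ hx, DiskTendsto.of_subset_smul hlim hc h⟩

lemma IsBanachDisk.smul (hB : IsBanachDisk B) (hc : 0 < c) : IsBanachDisk (c • B) := by
  obtain ⟨hconv, hbal, hsep, hcomp⟩ := hB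
  have hB_sub : B ⊆ c⁻¹ • c • B := by rw [inv_smul_smul₀ hc.ne']
  exact ⟨hconv.smul c, hbal.smul c, hsep.of_subset_smul hc subset_rfl,
    hcomp.of_subset_smul (inv_pos.2 hc) hc hB_sub subset_rfl⟩

end SubsetSmul

section Disk

variable {B : Set F} {x : ℕ → F} {l : F}

lemma DiskTendsto.comp_add_sub (hx : DiskTendsto B x l) (s : ℕ) (a : F) :
    DiskTendsto B (fun n => x (n + s) - a) (l - a) := fun ε hε =>
  (hx ε hε).imp fun N hN n hn => by
    simpa only [sub_sub_sub_cancel_right] using hN (n + s) (by omega)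

lemma DiskCauchy.comp_add_sub (hx : DiskCauchy B x) (s : ℕ) (a : F) :
    DiskCauchy B (fun n => x (n + s) - a) := fun ε hε =>
  (hx ε hε).imp fun N hN m hm n hn => by
    simpa only [sub_sub_sub_cancel_right] using hN (m + s) (by omega) (n + s) (by omega)

lemma DiskTendsto.diskCauchy (hconv : Convex ℝ B) (hbal : Balanced ℝ B)
    (hx : DiskTendsto B x l) : DiskCauchy B x := by
  intro ε hε
  obtain ⟨N, hN⟩ := hx (ε / 2) (half_pos hε)
  refine ⟨N, fun m hm n hn => ?_⟩
  have h := hconv.sub_mem_add_smul hbal (half_pos hε).le (half_pos hε).le (hN m hm) (hN n hn)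
  rwa [sub_sub_sub_cancel_right, add_halves] at h

lemma DiskTendsto.unique (hconv : Convex ℝ B) (hbal : Balanced ℝ B) (hsep : IsSeparatedDisk B)
    {l' : F} (hl : DiskTendsto B x l) (hl' : DiskTendsto B x l') : l = l' := by
  have hsmall : ∀ ε : ℝ, 0 < ε → l' - l ∈ ε • B := by
    intro ε hε
    obtain ⟨N, hN⟩ := hl (ε / 2) (half_pos hε)
    obtain ⟨N', hN'⟩ := hl' (ε / 2) (half_pos hε)
    have h := hconv.sub_mem_add_smul hbal (half_pos hε).le (half_pos hε).le
      (hN (max N N') (le_max_left _ _)) (hN' (max N N') (le_max_right _ _))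
    rwa [sub_sub_sub_cancel_left, add_halves] at h
  have hspan : l' - l ∈ Submodule.span ℝ B :=
    subset_span_of_subset_smul subset_rfl (hsmall 1 one_pos)
  exact (sub_eq_zero.1 (hsep _ hspan hsmall)).symm

lemma DiskTendsto.mackeyTendsto (hbal : Balanced ℝ B) {𝓓 : Set (Set F)} (hB : B ∈ 𝓓)
    (hx : DiskTendsto B x l) : MackeyTendsto 𝓓 x l := by
  refine ⟨B, hB, fun lam hlam => ?_⟩
  rw [← hbal.smul_congr (by simp : ‖|lam|‖ = ‖lam‖)]
  exact hx |lam| (abs_pos.2 hlam)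

lemma IsBanachDisk.inter_submodule (hB : IsBanachDisk B) (E : Submodule ℝ F)
    (hE : ∀ x l, (∀ n, x n ∈ E) → DiskTendsto B x l → l ∈ E) : IsBanachDisk (B ∩ E) := by
  obtain ⟨hconv, hbal, hsep, hcomp⟩ := hB
  have hsub : B ∩ E ⊆ (1 : ℝ) • B := by rw [one_smul]; exact Set.inter_subset_left
  refine ⟨hconv.inter E.convex, hbal.inter E.balanced, hsep.of_subset_smul one_pos hsub, ?_⟩
  intro y hy hcauchy
  have hyE : ∀ n, y n ∈ E := fun n => Submodule.span_le.2 Set.inter_subset_right (hy n)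
  obtain ⟨l, -, hlim⟩ := hcomp y
    (fun n => Submodule.span_le.2 (subset_span_of_subset_smul hsub) (hy n))
    (DiskCauchy.of_subset_smul hcauchy one_pos hsub)
  have hlE : l ∈ E := hE y l hyE hlim
  have hlim' : DiskTendsto (B ∩ E) y l := fun ε hε =>
    (hlim ε hε).imp fun _ hN n hn =>
      mem_smul_inter_submodule E hε.ne' (hN n hn) (E.sub_mem (hyE n) hlE)
  obtain ⟨N, hN⟩ := hlim' 1 one_pos
  refine ⟨l, ?_, hlim'⟩
  rw [← sub_sub_cancel (y N) l]
  exact Submodule.sub_mem _ (hy N) (subset_span_of_subset_smul subset_rfl (hN N le_rfl))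

end Disk

def scaledDifferences (x : ℕ → F) (N : ℕ → ℕ) : Set F :=
  {z | ∃ k m n, N k ≤ m ∧ N k ≤ n ∧ z = (2 : ℝ) ^ k • (x m - x n)}

section ScaledDifferences

variable {x : ℕ → F} {N : ℕ → ℕ}

lemma scaledDifferences_subset_iff {B : Set F} :
    scaledDifferences x N ⊆ B ↔
      ∀ k, ∀ m ≥ N k, ∀ n ≥ N k, x m - x n ∈ ((2 : ℝ) ^ k)⁻¹ • B := by
  constructor
  · intro h k m hm n hn
    rw [Set.mem_smul_set_iff_inv_smul_mem₀ (by positivity), inv_inv]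
    exact h ⟨k, m, n, hm, hn, rfl⟩
  · rintro h _ ⟨k, m, n, hm, hn, rfl⟩
    have hk := h k m hm n hn
    rwa [Set.mem_smul_set_iff_inv_smul_mem₀ (by positivity), inv_inv] at hk

lemma scaledDifferences_subset_submodule {E : Submodule ℝ F} (hx : ∀ n, x n ∈ E) :
    scaledDifferences x N ⊆ E := by
  rintro _ ⟨k, m, n, -, -, rfl⟩
  exact E.smul_mem _ (E.sub_mem (hx m) (hx n))

lemma diskCauchy_of_scaledDifferences_subset {B : Set F} (hbal : Balanced ℝ B)
    (h : scaledDifferences x N ⊆ B) : DiskCauchy B x := by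
  intro ε hε
  obtain ⟨K, hK⟩ := exists_pow_lt_of_lt_one hε (by norm_num : (2 : ℝ)⁻¹ < 1)
  rw [inv_pow] at hK
  refine ⟨N K, fun m hm n hn => ?_⟩
  refine hbal.smul_mono ?_ (scaledDifferences_subset_iff.1 h K m hm n hn)
  rw [Real.norm_of_nonneg (by positivity), Real.norm_of_nonneg hε.le]
  exact hK.le

end ScaledDifferences

theorem exists_banachDisk_of_bornologicallyClosed {I : Type*} {b : I → Set F}
    (hBan : ∀ i, IsBanachDisk (b i)) {𝓒 : Set (Set F)}
    (hpres : ∀ S : Set F, S ∈ 𝓒 ↔ ∃ (i : I) (δ : ℝ), 0 < δ ∧ S ⊆ δ • b i)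
    {E : Submodule ℝ F} (hE : BornologicallyClosed 𝓒 (E : Set F)) {S : Set F} (hS : S ∈ 𝓒)
    (hSE : S ⊆ E) : ∃ B : Set F, B ⊆ (E : Set F) ∧ B ∈ 𝓒 ∧ IsBanachDisk B ∧ S ⊆ B := by
  obtain ⟨i, δ, hδ, hSi⟩ := (hpres S).1 hS
  have hD : IsBanachDisk (δ • b i) := (hBan i).smul hδ
  have hD𝓒 : δ • b i ∈ 𝓒 := (hpres _).2 ⟨i, δ, hδ, subset_rfl⟩
  exact ⟨δ • b i ∩ E, Set.inter_subset_right, (hpres _).2 ⟨i, δ, hδ, Set.inter_subset_left⟩,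
    hD.inter_submodule E fun x l hx hlim => hE x l hx (hlim.mackeyTendsto hD.2.1 hD𝓒),
    Set.subset_inter hSi hSE⟩

theorem bornologicallyClosed_of_forall_exists_banachDisk {I : Type*} [Preorder I]
    [IsDirected I (· ≤ ·)] {b : I → Set F} (hBan : ∀ i, IsBanachDisk (b i))
    (hmono : ∀ i j, i ≤ j → ∃ c : ℝ, 0 < c ∧ b i ⊆ c • b j) {𝓒 : Set (Set F)}
    (hpres : ∀ S : Set F, S ∈ 𝓒 ↔ ∃ (i : I) (δ : ℝ), 0 < δ ∧ S ⊆ δ • b i)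
    {E : Submodule ℝ F}
    (hcomp : ∀ S ∈ 𝓒, S ⊆ (E : Set F) →
      ∃ B : Set F, B ⊆ (E : Set F) ∧ B ∈ 𝓒 ∧ IsBanachDisk B ∧ S ⊆ B) :
    BornologicallyClosed 𝓒 (E : Set F) := by
  rintro x l hxE ⟨B, hB𝓒, hBlim⟩
  obtain ⟨i, δ, hδ, hBi⟩ := (hpres B).1 hB𝓒
  have hxi : DiskTendsto (b i) x l :=
    DiskTendsto.of_subset_smul (fun ε hε => hBlim ε hε.ne') hδ hBi
  obtain ⟨hconvi, hbali, -, -⟩ := hBan i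
  choose N hN using fun k : ℕ => hxi.diskCauchy hconvi hbali _ (inv_pos.2 (pow_pos two_pos k))
  have hSi : scaledDifferences x N ∈ 𝓒 :=
    (hpres _).2 ⟨i, 1, one_pos, by rw [one_smul]; exact scaledDifferences_subset_iff.2 hN⟩
  obtain ⟨B', hB'E, hB'𝓒, ⟨-, hbal', -, hcomp'⟩, hSB'⟩ :=
    hcomp _ hSi (scaledDifferences_subset_submodule hxE)
  -- `x` itself need not lie in the span of `B'`, but its differences beyond `N 0` do.
  set y : ℕ → F := fun n => x (n + N 0) - x (N 0)
  have hyB' : ∀ n, y n ∈ B' := fun n => by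
    simpa using scaledDifferences_subset_iff.1 hSB' 0 (n + N 0) (by omega) (N 0) le_rfl
  obtain ⟨z, hz, hyz⟩ := hcomp' y (fun n => Submodule.subset_span (hyB' n))
    ((diskCauchy_of_scaledDifferences_subset hbal' hSB').comp_add_sub (N 0) (x (N 0)))
  obtain ⟨j, δ', hδ', hB'j⟩ := (hpres B').1 hB'𝓒
  obtain ⟨p, hip, hjp⟩ := directed_of (· ≤ ·) i j
  obtain ⟨c, hc, hcip⟩ := hmono i p hip
  obtain ⟨c', hc', hcjp⟩ := hmono j p hjp
  obtain ⟨hconvp, hbalp, hsepp, -⟩ := hBan p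
  have hB'p : B' ⊆ (δ' * c') • b p := hB'j.trans (by rw [mul_smul]; exact Set.smul_set_mono hcjp)
  have hlz : l - x (N 0) = z := DiskTendsto.unique hconvp hbalp hsepp
    ((hxi.comp_add_sub (N 0) (x (N 0))).of_subset_smul hc hcip)
    (DiskTendsto.of_subset_smul hyz (mul_pos hδ' hc') hB'p)
  rw [← sub_add_cancel l (x (N 0)), hlz]
  exact E.add_mem (Submodule.span_le.2 hB'E hz) (hxE _)

theorem complete_iff_bornologicallyClosed_general
    {I : Type*} [Preorder I] [IsDirected I (· ≤ ·)]
    (b : I → Set F)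
    (hBan : ∀ i, IsBanachDisk (b i))
    (hmono : ∀ i j, i ≤ j → ∃ c : ℝ, 0 < c ∧ b i ⊆ c • b j)
    (𝓒 : Set (Set F))
    (hpres : ∀ S : Set F, S ∈ 𝓒 ↔ ∃ (i : I) (δ : ℝ), 0 < δ ∧ S ⊆ δ • b i)
    (E : Submodule ℝ F) :
    (∀ S ∈ 𝓒, S ⊆ (E : Set F) →
        ∃ B : Set F, B ⊆ (E : Set F) ∧ B ∈ 𝓒 ∧ IsBanachDisk B ∧ S ⊆ B) ↔
      BornologicallyClosed 𝓒 (E : Set F) :=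
  ⟨bornologicallyClosed_of_forall_exists_banachDisk hBan hmono hpres,
    fun hE _ hS hSE => exists_banachDisk_of_bornologicallyClosed hBan hpres hE hS hSE⟩

/-- Let `(F, 𝓒)` be a complete bornological space, presented as a filtered injective
colimit of bornologifications of Banach spaces (spans of Banach disks `b i` with their
gauges), and let `E ⊆ F` be a linear subspace with the subspace bornology. Then `E` is
complete (every bounded subset of `E` is contained in a bounded Banach disk inside `E`)
if and only if `E` is bornologically closed in `F`. -/
theorem complete_iff_bornologicallyClosed
    {I : Type*} [Preorder I] [IsDirected I (· ≤ ·)] [Nonempty I]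
    (b : I → Set F)
    (hBan : ∀ i, IsBanachDisk (b i))
    (hmono : ∀ i j, i ≤ j → ∃ c : ℝ, 0 < c ∧ b i ⊆ c • b j)
    (𝓒 : Set (Set F))
    (hpres : ∀ S : Set F, S ∈ 𝓒 ↔ ∃ (i : I) (δ : ℝ), 0 < δ ∧ S ⊆ δ • b i)
    (E : Submodule ℝ F) :
    (∀ S ∈ 𝓒, S ⊆ (E : Set F) →
        ∃ B : Set F, B ⊆ (E : Set F) ∧ B ∈ 𝓒 ∧ IsBanachDisk B ∧ S ⊆ B) ↔
      BornologicallyClosed 𝓒 (E : Set F) :=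
  complete_iff_bornologicallyClosed_general b hBan hmono 𝓒 hpres E
end
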